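/- Let e ≥ 1 be an integer, θ ≥ 2 an integer, and (α_k)_{k∈ℕ} a sequence of real numbers with α₀ > 0 for which there exists c > 1 with α_{k+1} > c·α_k for all k. Let J ⊆ ℕ∖{0} have cardinality at least 2, let F ⊆ ℝ be a finite set, and let φ : ℕ → {0,…,e} be a function such that φ⁻¹({i}) is infinite for every i ∈ {0,…,e}. Then there exist e+1 sequences (u_k^i)_{k∈ℕ} (i = 0,…,e) such that for all i and k: u_k^i ∈ J if φ(k) = i and u_k^i = 0 otherwise, and such that the e+1 real numbers σ_i = Σ_{k=0}^{∞} u_k^i / θ^{⌊α_k⌋} (i = 0,…,e) form a family that is algebraically independent over ℚ(F). -/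

import Mathlib

/-!
Choose distinct `a, b ∈ J` and let `u^i` take the value `a` or `b` on the fiber `φ⁻¹{i}`.
Since `α` grows geometrically, `⌊α_{k+1}⌋ ≥ ⌊α_k⌋ + 2` for all `k ≥ N`, so with `θ ≥ 2` the first
term beyond `N` at which two such choices differ outweighs the whole rest of the series. Letting
the choices vary only beyond `N`, each `σ_i` therefore ranges over an uncountable set. Only
countably many reals are algebraic over a countable ring, so the `σ_i` can be chosen one at a time,
each transcendental over the ring generated by `ℚ(F)` and the previously chosen ones.
-/

open Filter Set

open Cardinal in
theorem Algebra.countable_adjoin {K A : Type*} [CommRing K] [Countable K] [Semiring A] [Algebra K A]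
    (s : Set A) [Countable s] : Countable (Algebra.adjoin K s) := by
  rw [← mk_le_aleph0_iff, ← lift_le_aleph0]
  refine (Algebra.lift_cardinalMk_adjoin_le K s).trans ?_
  simp [mk_le_aleph0]

open Cardinal in
theorem IntermediateField.countable_adjoin {K L : Type*} [Field K] [Countable K] [Field L]
    [Algebra K L] (s : Set L) [Countable s] : Countable (IntermediateField.adjoin K s) := by
  rw [← mk_le_aleph0_iff, ← lift_le_aleph0]
  refine (IntermediateField.lift_cardinalMk_adjoin_le K s).trans ?_
  simp [mk_le_aleph0]

theorem exists_transcendental_mem_of_not_countable {R A : Type*} [CommRing R] [IsDomain R]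
    [Countable R] [CommRing A] [IsDomain A] [Algebra R A] [Module.IsTorsionFree R A]
    {X : Set A} (hX : ¬ X.Countable) : ∃ x ∈ X, Transcendental R x := by
  by_contra! h
  exact hX ((Algebraic.countable R A).mono fun x hx => not_not.1 (h x hx))

theorem exists_algebraicIndependent_of_forall_not_countable {K A : Type*} [Field K] [Countable K]
    [Field A] [Algebra K A] {n : ℕ} (X : Fin n → Set A) (hX : ∀ i, ¬ (X i).Countable) :
    ∃ x : Fin n → A, (∀ i, x i ∈ X i) ∧ AlgebraicIndependent K x := by
  induction n with
  | zero => exact ⟨finZeroElim, finZeroElim, algebraicIndependent_empty_type⟩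
  | succ n ih =>
    obtain ⟨x, hxX, hx⟩ := ih (X ∘ Fin.succ) fun i => hX i.succ
    have := Algebra.countable_adjoin (K := K) (range x)
    obtain ⟨y, hyX, hy⟩ :=
      exists_transcendental_mem_of_not_countable (R := Algebra.adjoin K (range x)) (hX 0)
    refine ⟨Fin.cons y x, Fin.cases hyX hxX, ?_⟩
    have hcons : (fun o : Option (Fin n) => o.elim y x) ∘ finSuccEquiv n = Fin.cons y x := by
      ext i
      cases i using Fin.cases <;> simp
    rw [← hcons, algebraicIndependent_equiv]
    exact (hx.option_iff_transcendental y).2 hy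

theorem not_countable_powerset {α : Type*} {s : Set α} (hs : s.Infinite) : ¬ (𝒫 s).Countable := by
  have := hs.to_subtype
  rw [← Cardinal.le_aleph0_iff_set_countable, Cardinal.mk_powerset, not_le]
  exact (Cardinal.aleph0_le_mk s).trans_lt (Cardinal.cantor _)

theorem eventually_floor_add_two_le {α : ℕ → ℝ} {c : ℝ} (hα0 : 0 < α 0) (hc : 1 < c)
    (hα : ∀ k, c * α k < α (k + 1)) : ∀ᶠ k in atTop, ⌊α k⌋ + 2 ≤ ⌊α (k + 1)⌋ := by
  have hpow : ∀ k, c ^ k * α 0 ≤ α k := by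
    intro k
    induction k with
    | zero => simp
    | succ k ih => nlinarith [hα k, pow_succ' c k]
  have htop : Tendsto α atTop atTop :=
    tendsto_atTop_mono hpow ((tendsto_pow_atTop_atTop_of_one_lt hc).atTop_mul_const hα0)
  filter_upwards [htop.eventually_ge_atTop (2 / (c - 1))] with k hk
  have hgap : α k + 2 ≤ α (k + 1) := by
    have := (div_le_iff₀' (sub_pos.2 hc)).1 hk
    linarith [hα k]
  calc ⌊α k⌋ + 2 = ⌊α k + 2⌋ := (Int.floor_add_ofNat _ 2).symm
    _ ≤ ⌊α (k + 1)⌋ := Int.floor_mono hgap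

theorem four_mul_zpow_le_zpow {θ : ℝ} (hθ : 2 ≤ θ) {m n : ℤ} (hmn : m + 2 ≤ n) :
    4 * θ ^ m ≤ θ ^ n := calc
  4 * θ ^ m ≤ θ ^ m * θ ^ (2 : ℤ) := by
    rw [mul_comm, zpow_two]; gcongr; nlinarith
  _ = θ ^ (m + 2) := (zpow_add₀ (by positivity) _ _).symm
  _ ≤ θ ^ n := zpow_le_zpow_right₀ (by linarith) hmn

section Lacunary

variable {t : ℕ → ℝ} {r : ℝ} {N : ℕ} (ht : ∀ k, 0 < t k) (htr : ∀ k ≥ N, r * t k ≤ t (k + 1))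
include ht htr

theorem summable_div_of_lacunary (hr : 1 < r) {d : ℕ → ℝ} {M : ℝ} (hd : ∀ k, |d k| ≤ M) :
    Summable fun k => d k / t k := by
  have hinv : Summable fun k => (t k)⁻¹ := by
    refine summable_of_ratio_norm_eventually_le (inv_lt_one_of_one_lt₀ hr)
      (eventually_atTop.2 ⟨N, fun k hk => ?_⟩)
    rw [Real.norm_of_nonneg (inv_nonneg.2 (ht _).le), Real.norm_of_nonneg (inv_nonneg.2 (ht _).le),
      ← mul_inv]
    exact inv_anti₀ (mul_pos (by linarith) (ht k)) (htr k hk)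
  refine (hinv.mul_left M).of_norm_bounded fun k => ?_
  rw [norm_div, Real.norm_eq_abs, Real.norm_of_nonneg (ht k).le, div_eq_mul_inv]
  exact mul_le_mul_of_nonneg_right (hd k) (inv_nonneg.2 (ht k).le)

theorem tsum_div_ne_zero_of_lacunary (hr : 2 < r) {δ : ℕ → ℝ} (hδ : ∀ k, |δ k| ≤ |δ N|)
    (hδN : δ N ≠ 0) (hδlt : ∀ k < N, δ k = 0) : ∑' k, δ k / t k ≠ 0 := by
  set D := |δ N| / t N with hD
  have hDpos : 0 < D := div_pos (abs_pos.2 hδN) (ht N)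
  have hpow : ∀ j, r ^ j * t N ≤ t (j + N) := by
    intro j
    induction j with
    | zero => simp
    | succ j ih => calc
        r ^ (j + 1) * t N = r * (r ^ j * t N) := by ring
        _ ≤ r * t (j + N) := by gcongr
        _ ≤ t (j + 1 + N) := by rw [Nat.add_right_comm]; exact htr _ (Nat.le_add_left N j)
  have hbound : ∀ j, ‖δ (j + N) / t (j + N)‖ ≤ D * r⁻¹ ^ j := by
    intro j
    rw [Real.norm_eq_abs, abs_div, abs_of_pos (ht _), hD, inv_pow, ← div_eq_mul_inv, div_div]
    exact div_le_div₀ (abs_nonneg _) (hδ _) (mul_pos (ht N) (pow_pos (by linarith) j))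
      (by linarith [hpow j])
  have hr0 : 0 ≤ r⁻¹ := inv_nonneg.2 (by linarith)
  have hr' : r⁻¹ < 1 := inv_lt_one_of_one_lt₀ (by linarith)
  have hsum : Summable fun j => δ (j + N) / t (j + N) :=
    ((summable_geometric_of_lt_one hr0 hr').mul_left D).of_norm_bounded hbound
  have hshift : ∑' k, δ k / t k = ∑' j, δ (j + N) / t (j + N) := by
    have hhead : ∑ k ∈ Finset.range N, δ k / t k = 0 :=
      Finset.sum_eq_zero fun k hk => by rw [hδlt k (Finset.mem_range.1 hk), zero_div]
    have hsum' := (summable_nat_add_iff (f := fun k => δ k / t k) N).1 hsum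
    rw [← hsum'.sum_add_tsum_nat_add N, hhead, zero_add]
  have htail : ‖∑' j, δ (j + 1 + N) / t (j + 1 + N)‖ ≤ D * r⁻¹ * (1 - r⁻¹)⁻¹ :=
    tsum_of_norm_bounded ((hasSum_geometric_of_lt_one hr0 hr').mul_left (D * r⁻¹))
      fun j => (hbound (j + 1)).trans_eq (by ring)
  have htail_lt : D * r⁻¹ * (1 - r⁻¹)⁻¹ < D := by
    rw [mul_assoc]
    refine mul_lt_of_lt_one_right hDpos ?_
    rw [← div_eq_mul_inv, div_lt_one (by linarith)]
    have : r⁻¹ < 2⁻¹ := inv_strictAnti₀ (by norm_num) hr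
    linarith
  rw [hshift, hsum.tsum_eq_zero_add]
  intro h
  have hhead : ‖δ (0 + N) / t (0 + N)‖ = D := by
    rw [zero_add, Real.norm_eq_abs, abs_div, abs_of_pos (ht N)]
  rw [eq_neg_of_add_eq_zero_left h, norm_neg] at hhead
  linarith

end Lacunary

open Classical in
noncomputable def digits (a b : ℕ) (S T : Set ℕ) (k : ℕ) : ℕ :=
  if k ∈ S then if k ∈ T then a else b else 0

section Digits

variable {a b : ℕ} {S T T' : Set ℕ} {k : ℕ}

theorem digits_of_notMem (hk : k ∉ S) : digits a b S T k = 0 := by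
  simp [digits, hk]

theorem digits_mem {J : Set ℕ} (ha : a ∈ J) (hb : b ∈ J) (hk : k ∈ S) : digits a b S T k ∈ J := by
  unfold digits
  split_ifs <;> assumption

theorem digits_le_max : digits a b S T k ≤ max a b := by
  unfold digits
  split_ifs <;> omega

theorem abs_sub_digits (hT : T ⊆ S) (hT' : T' ⊆ S) :
    |(digits a b S T k : ℝ) - digits a b S T' k| =
      (symmDiff T T').indicator (fun _ => |(a : ℝ) - b|) k := by
  have hS := @hT k
  have hS' := @hT' k
  by_cases h : k ∈ T <;> by_cases h' : k ∈ T' <;>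
    simp_all [digits, mem_symmDiff, abs_sub_comm]

end Digits

section LacunaryDigits

variable {t : ℕ → ℝ} {r : ℝ} {N : ℕ} (hr : 2 < r) (ht : ∀ k, 0 < t k)
  (htr : ∀ k ≥ N, r * t k ≤ t (k + 1)) {a b : ℕ} (hab : a ≠ b) (S : Set ℕ)
include hr ht htr hab

theorem injOn_tsum_digits :
    InjOn (fun T => ∑' k, (digits a b S T k : ℝ) / t k) (𝒫 (S \ Iio N)) := by
  classical
  intro T hT T' hT' hsum
  by_contra hne
  have hdiff : ∃ k, k ∈ symmDiff T T' := by
    by_contra! h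
    exact hne (symmDiff_eq_bot.1 (eq_empty_iff_forall_notMem.2 h))
  set k₀ := Nat.find hdiff
  set δ : ℕ → ℝ := fun k => (digits a b S T k : ℝ) - digits a b S T' k
  have habs (k : ℕ) : |δ k| = (symmDiff T T').indicator (fun _ => |(a : ℝ) - b|) k :=
    abs_sub_digits (hT.trans sdiff_subset) (hT'.trans sdiff_subset)
  have hk₀ : k₀ ∈ symmDiff T T' := Nat.find_spec hdiff
  have hNk₀ : N ≤ k₀ := by
    rcases hk₀ with ⟨hk, -⟩ | ⟨hk, -⟩
    exacts [not_lt.1 (hT hk).2, not_lt.1 (hT' hk).2]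
  have hδk₀ : |δ k₀| = |(a : ℝ) - b| := by rw [habs, indicator_of_mem hk₀]
  have hsummable (T : Set ℕ) : Summable fun k => (digits a b S T k : ℝ) / t k :=
    summable_div_of_lacunary ht htr (by linarith) (M := max a b) fun k => by
      rw [Nat.abs_cast]; exact_mod_cast digits_le_max
  refine tsum_div_ne_zero_of_lacunary ht (fun k hk => htr k (hNk₀.trans hk)) hr (δ := δ)
    (fun k => ?_) ?_ (fun k hk => ?_) ?_
  · rw [hδk₀, habs]
    exact indicator_le_self' (fun _ _ => abs_nonneg _) k
  · rw [← abs_pos, hδk₀, abs_pos, sub_ne_zero]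
    exact_mod_cast hab
  · rw [← abs_eq_zero, habs, indicator_of_notMem (Nat.find_min hdiff hk)]
  · simp only [δ, sub_div]
    rw [(hsummable T).tsum_sub (hsummable T'), sub_eq_zero]
    exact hsum

theorem not_countable_image_tsum_digits (hS : (S \ Iio N).Infinite) :
    ¬ ((fun T => ∑' k, (digits a b S T k : ℝ) / t k) '' 𝒫 (S \ Iio N)).Countable :=
  fun h => not_countable_powerset hS
    (countable_of_injective_of_countable_image (injOn_tsum_digits hr ht htr hab S) h)

end LacunaryDigits

theorem statement9 (e : ℕ) (θ : ℕ) (hθ : 2 ≤ θ)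
    (α : ℕ → ℝ) (hα0 : 0 < α 0) (c : ℝ) (hc : 1 < c)
    (hαgrow : ∀ k, c * α k < α (k + 1))
    (J : Set ℕ) (hJ2 : ∃ a ∈ J, ∃ b ∈ J, a ≠ b)
    (F : Finset ℝ)
    (φ : ℕ → ℕ)
    (hφinf : ∀ i ≤ e, {k | φ k = i}.Infinite) :
    ∃ u : ℕ → ℕ → ℕ,
      (∀ i ≤ e, ∀ k, (φ k = i → u i k ∈ J) ∧ (φ k ≠ i → u i k = 0)) ∧
      AlgebraicIndependent (IntermediateField.adjoin ℚ (F : Set ℝ))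
        (fun i : Fin (e + 1) => ∑' k, (u i k : ℝ) / (θ : ℝ) ^ ⌊α k⌋) := by
  obtain ⟨a, ha, b, hb, hab⟩ := hJ2
  obtain ⟨N, hN⟩ := eventually_atTop.1 (eventually_floor_add_two_le hα0 hc hαgrow)
  have hθ' : (2 : ℝ) ≤ θ := by exact_mod_cast hθ
  have ht (k : ℕ) : 0 < (θ : ℝ) ^ ⌊α k⌋ := zpow_pos (by linarith) _
  have htr : ∀ k ≥ N, 4 * (θ : ℝ) ^ ⌊α k⌋ ≤ (θ : ℝ) ^ ⌊α (k + 1)⌋ :=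
    fun k hk => four_mul_zpow_le_zpow hθ' (hN k hk)
  have := IntermediateField.countable_adjoin (K := ℚ) (F : Set ℝ)
  obtain ⟨x, hxX, hx⟩ := exists_algebraicIndependent_of_forall_not_countable
    (K := IntermediateField.adjoin ℚ (F : Set ℝ)) _ fun i : Fin (e + 1) =>
      not_countable_image_tsum_digits (by norm_num) ht htr hab {k | φ k = i}
        ((hφinf i (Nat.lt_succ_iff.1 i.2)).sdiff (finite_Iio N))
  have hT (i : ℕ) : ∃ T : Set ℕ, ∀ hi : i < e + 1,
      ∑' k, (digits a b {k | φ k = i} T k : ℝ) / (θ : ℝ) ^ ⌊α k⌋ = x ⟨i, hi⟩ := by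
    by_cases hi : i < e + 1
    · obtain ⟨T, -, hT⟩ := hxX ⟨i, hi⟩
      exact ⟨T, fun _ => hT⟩
    · exact ⟨∅, fun h => absurd h hi⟩
  choose T hT using hT
  refine ⟨fun i => digits a b {k | φ k = i} (T i),
    fun i _ k => ⟨fun hk => digits_mem ha hb hk, fun hk => digits_of_notMem hk⟩, ?_⟩
  rwa [show (fun i : Fin (e + 1) => _) = x from funext fun i => hT i i.2]
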